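/- arXiv:1705.01275 — 3 statements merged into one kernel-verified Lean document; each statement's English description precedes it below -/
import Mathlib

section
/- Let m ≥ 2 and let G be a finite group such that G/Z(G) is isomorphic to the dihedral group D_{2m} of order 2m. Then the Laplacian spectrum of the non-commuting graph 𝒜_G is {0^1, (m|Z(G)|)^{(m − 1)|Z(G)| − 1}, (2(m − 1)|Z(G)|)^{m|Z(G)| − m}, ((2m − 1)|Z(G)|)^m}. -/
open Polynomial

/-- The non-commuting graph of a group `G`: vertices are the non-central elements,
two vertices adjacent iff they do not commute. -/
def nonCommGraph (G : Type*) [Group G] : SimpleGraph {x : G // x ∉ Subgroup.center G} where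
  Adj x y := ¬ Commute (x : G) (y : G)
  symm := ⟨fun _ _ h hc => h hc.symm⟩
  loopless := ⟨fun _ h => h (Commute.refl _)⟩

/-- The Laplacian matrix of the non-commuting graph, over `ℝ`. -/
noncomputable def ncLap (G : Type*) [Group G] [Fintype G] :
    Matrix {x : G // x ∉ Subgroup.center G} {x : G // x ∉ Subgroup.center G} ℝ :=
  letI := Classical.decEq G
  letI : DecidablePred (fun x : G => x ∉ Subgroup.center G) := fun _ => Classical.dec _
  letI : DecidableRel (nonCommGraph G).Adj := fun _ _ => Classical.dec _
  (nonCommGraph G).lapMatrix ℝ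

/-- The characteristic polynomial of the Laplacian matrix of the non-commuting graph. -/
noncomputable def ncCharpoly (G : Type*) [Group G] [Fintype G] : Polynomial ℝ :=
  letI := Classical.decEq G
  letI : DecidablePred (fun x : G => x ∉ Subgroup.center G) := fun _ => Classical.dec _
  (ncLap G).charpoly

/-- The non-commuting graph of `G` is L-integral: every eigenvalue of its Laplacian
matrix is an integer. -/
def ncLIntegral (G : Type*) [Group G] [Fintype G] : Prop :=
  letI := Classical.decEq G
  letI : DecidablePred (fun x : G => x ∉ Subgroup.center G) := fun _ => Classical.dec _
  ∀ μ ∈ spectrum ℝ (ncLap G), ∃ k : ℤ, μ = (k : ℝ)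

/-!
If `G/Z(G) ≅ D_{2m}`, two non-central elements of `G` commute exactly when their images are
both rotations or the same reflection: preimages of rotations commute because a lift of `r 1`
generates them modulo the centre, and a non-central preimage of a rotation that commuted with a
preimage of a reflection would commute with all of `G`. Hence `𝒜_G` is the complete multipartite
graph with one part of size `(m - 1)|Z(G)|` and `m` parts, the reflection cosets, of size `|Z(G)|`.

For a complete multipartite graph on `N` vertices with parts of sizes `s_c`, `x • 1 - L` is the
all-ones matrix plus a block-diagonal matrix with blocks `(x - N + s_c) • 1 - J`, all of whose rows
sum to `x - N`; the matrix determinant lemma gives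
`det (x • 1 - L) = x (x - N)^(k - 1) ∏ (x - N + s_c)^(s_c - 1)`.
-/

section Determinant

open Matrix Finset

variable {K ι : Type*} [Field K] [Fintype ι] [DecidableEq ι]

theorem Matrix.det_add_const_of_forall_sum_eq {M : Matrix ι ι K} {β : K} (hM : IsUnit M.det)
    (hβ : β ≠ 0) (hrow : ∀ i, ∑ j, M i j = β) (c : K) :
    (M + of fun _ _ => c).det = M.det * (1 + c * Fintype.card ι / β) := by
  have hJ : (of fun _ _ => c : Matrix ι ι K) =
      replicateCol Unit (fun _ : ι => c) * replicateRow Unit (fun _ : ι => (1 : K)) := by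
    ext i j
    simp [mul_apply]
  have hcol :
      M * replicateCol Unit (fun _ : ι => c / β) = replicateCol Unit (fun _ : ι => c) := by
    ext i u
    simp only [mul_apply, replicateCol_apply, ← Finset.sum_mul, hrow]
    field_simp
  have hinv :
      M⁻¹ * replicateCol Unit (fun _ : ι => c) = replicateCol Unit (fun _ : ι => c / β) := by
    rw [← hcol, nonsing_inv_mul_cancel_left _ _ hM]
  rw [hJ, det_add_replicateCol_mul_replicateRow hM, Matrix.mul_assoc, hinv,
    det_unique (n := Unit)]
  simp only [add_apply, one_apply_eq, mul_apply, replicateRow_apply, replicateCol_apply, one_mul,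
    sum_const, card_univ, nsmul_eq_mul]
  ring

theorem Matrix.det_smul_one_sub_const_one [Nonempty ι] {α : K} (hα : α ≠ 0) :
    (α • (1 : Matrix ι ι K) - of fun _ _ => 1).det =
      (α - Fintype.card ι) * α ^ (Fintype.card ι - 1) := by
  have hrow : ∀ i, ∑ j, (α • (1 : Matrix ι ι K)) i j = α := fun i => by
    simp [one_apply]
  have hunit : IsUnit (α • (1 : Matrix ι ι K)).det := by
    simpa [det_smul] using hα
  have hneg : -(of fun _ _ => 1 : Matrix ι ι K) = of fun _ _ => -1 := rfl
  rw [sub_eq_add_neg, hneg, det_add_const_of_forall_sum_eq hunit hα hrow, det_smul, det_one]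
  obtain ⟨k, hk⟩ := Nat.exists_eq_add_of_lt (Fintype.card_pos (α := ι))
  rw [hk]
  simp only [zero_add, Nat.add_sub_cancel]
  push_cast
  field_simp
  ring

theorem Matrix.det_eq_prod_det_toSquareBlock {R κ : Type*} [CommRing R] [Fintype κ]
    [DecidableEq κ] {M : Matrix ι ι R} (P : ι → κ)
    (hM : ∀ i j, P i ≠ P j → M i j = 0) :
    M.det = ∏ c, (M.toSquareBlock P c).det := by
  let _ : LinearOrder κ := LinearOrder.lift' _ (Fintype.equivFin κ).injective
  exact BlockTriangular.det_fintype fun i j hij => hM i j hij.ne'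

end Determinant

section CompleteMultipartite

open Matrix Finset

variable {K V κ : Type*} [Field K] [Fintype V] [DecidableEq V] [DecidableEq κ]

def shiftedFiberMatrix (P : V → κ) (β : K) : Matrix V V K :=
  of fun v w => (if v = w then β + #{u | P u = P v} else 0) - if P v = P w then 1 else 0

variable {P : V → κ} {β : K}

theorem toSquareBlock_shiftedFiberMatrix (c : κ) :
    (shiftedFiberMatrix P β).toSquareBlock P c =
      (β + #{v | P v = c}) • (1 : Matrix _ _ K) - of fun _ _ => 1 := by
  ext ⟨v, hv⟩ ⟨w, hw⟩
  by_cases h : v = w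
  · subst h
    simp [shiftedFiberMatrix, toSquareBlock_def, hv]
  · have hne : (⟨v, hv⟩ : {v // P v = c}) ≠ ⟨w, hw⟩ := fun e => h (congrArg (·.1) e)
    simp [shiftedFiberMatrix, toSquareBlock_def, h, hv, hw, one_apply_ne hne]

theorem det_shiftedFiberMatrix [Fintype κ] (hP : Function.Surjective P)
    (hβ : ∀ c, β + #{v | P v = c} ≠ 0) :
    (shiftedFiberMatrix P β).det =
      β ^ Fintype.card κ * ∏ c, (β + #{v | P v = c}) ^ (#{v | P v = c} - 1) := by
  have hblock (c : κ) : ((shiftedFiberMatrix P β).toSquareBlock P c).det =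
      β * (β + #{v | P v = c}) ^ (#{v | P v = c} - 1) := by
    obtain ⟨v, hv⟩ := hP c
    have : Nonempty {v // P v = c} := ⟨⟨v, hv⟩⟩
    rw [toSquareBlock_shiftedFiberMatrix, det_smul_one_sub_const_one (hβ c), Fintype.card_subtype]
    ring
  rw [det_eq_prod_det_toSquareBlock P fun v w h => ?_, prod_congr rfl fun c _ => hblock c,
    prod_mul_distrib, prod_const, card_univ]
  simp [shiftedFiberMatrix, h, ne_of_apply_ne P h]

theorem sum_shiftedFiberMatrix_apply (v : V) : ∑ w, shiftedFiberMatrix P β v w = β := by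
  simp [shiftedFiberMatrix, sum_sub_distrib, sum_boole, eq_comm]

theorem SimpleGraph.scalar_sub_lapMatrix_of_adj_iff_ne (Γ : SimpleGraph V) [DecidableRel Γ.Adj]
    (hΓ : ∀ v w, Γ.Adj v w ↔ P v ≠ P w) (x : K) :
    scalar V x - Γ.lapMatrix K =
      shiftedFiberMatrix P (x - Fintype.card V) + of fun _ _ => 1 := by
  have hdeg (v : V) : (Γ.degree v : K) = Fintype.card V - #{u | P u = P v} := by
    rw [eq_sub_iff_add_eq, SimpleGraph.degree_eq_sum_if_adj]
    simp_rw [hΓ, ne_comm (a := P v)]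
    rw [sum_boole, ← Nat.cast_add, add_comm, card_filter_add_card_filter_not, card_univ]
  ext v w
  by_cases h : v = w
  · subst h
    simp [SimpleGraph.lapMatrix, SimpleGraph.degMatrix, shiftedFiberMatrix, hdeg]
    ring
  · by_cases hP : P v = P w <;>
      simp [SimpleGraph.lapMatrix, SimpleGraph.degMatrix, shiftedFiberMatrix, h, hP, hΓ]

theorem SimpleGraph.charpoly_lapMatrix_of_adj_iff_ne [LinearOrder K] [IsStrictOrderedRing K]
    [Fintype κ] [Nonempty κ] (Γ : SimpleGraph V) [DecidableRel Γ.Adj]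
    (hP : Function.Surjective P)
    (hΓ : ∀ v w, Γ.Adj v w ↔ P v ≠ P w) :
    (Γ.lapMatrix K).charpoly = X * (X - C (Fintype.card V : K)) ^ (Fintype.card κ - 1) *
      ∏ c, (X - C ((Fintype.card V : K) - #{v | P v = c})) ^ (#{v | P v = c} - 1) := by
  set N : K := (Fintype.card V : K)
  apply eq_of_infinite_eval_eq
  refine (Set.Iio_infinite (0 : K)).mono fun x (hx : x < 0) => ?_
  have hxN : x - N ≠ 0 := by
    have : (0 : K) ≤ N := Nat.cast_nonneg _
    exact (by linarith : x - N < 0).ne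
  have hxNc (c : κ) : x - N + #{v | P v = c} ≠ 0 := by
    have : (#{v | P v = c} : K) ≤ N := Nat.cast_le.mpr (card_le_univ _)
    exact (by linarith : x - N + #{v | P v = c} < 0).ne
  have hdet := det_shiftedFiberMatrix hP hxNc
  have hunit : IsUnit (shiftedFiberMatrix P (x - N)).det := by
    rw [hdet, isUnit_iff_ne_zero]
    exact mul_ne_zero (pow_ne_zero _ hxN) (prod_ne_zero_iff.mpr fun c _ => pow_ne_zero _ (hxNc c))
  rw [Set.mem_ofPred_eq, eval_charpoly, Γ.scalar_sub_lapMatrix_of_adj_iff_ne hΓ,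
    det_add_const_of_forall_sum_eq hunit hxN sum_shiftedFiberMatrix_apply, hdet]
  simp only [eval_mul, eval_pow, eval_sub, eval_X, eval_C, eval_prod, sub_sub_eq_add_sub,
    add_sub_right_comm x]
  obtain ⟨k, hk⟩ := Nat.exists_eq_add_of_lt (Fintype.card_pos (α := κ))
  rw [hk, Nat.add_sub_cancel, pow_succ, one_mul]
  have hx' : (x - N) * (1 + N / (x - N)) = x := by rw [mul_add, mul_div_cancel₀ _ hxN]; ring
  generalize ∏ c, (x - N + (#{v | P v = c} : K)) ^ (#{v | P v = c} - 1) = Q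
  linear_combination (x - N) ^ k * Q * hx'

end CompleteMultipartite

def DihedralGroup.reflectionIndex {m : ℕ} : DihedralGroup m → Option (ZMod m)
  | r _ => none
  | sr i => some i

theorem DihedralGroup.reflectionIndex_eq_some_iff {m : ℕ} {d : DihedralGroup m} {i : ZMod m} :
    d.reflectionIndex = some i ↔ d = sr i := by
  cases d <;> simp [reflectionIndex]

section CentralQuotientDihedral

open DihedralGroup Subgroup

variable {m : ℕ} {G : Type*} [Group G] {f : G →* DihedralGroup m}

theorem commute_of_inv_mul_mem_center {x y : G} (h : x⁻¹ * y ∈ center G) : Commute x y := by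
  simpa using (Commute.refl x).mul_right (mem_center_iff.mp h x)

theorem commute_of_map_eq (hker : f.ker = center G) {x y : G} (h : f x = f y) :
    Commute x y :=
  commute_of_inv_mul_mem_center <| hker ▸ by simp [MonoidHom.mem_ker, h]

theorem commute_of_map_eq_r [NeZero m] (hker : f.ker = center G)
    (hsurj : Function.Surjective f) {x y : G} {j k : ZMod m} (hx : f x = r j) (hy : f y = r k) :
    Commute x y := by
  obtain ⟨a, ha⟩ := hsurj (r 1)
  have hdecomp {w : G} {l : ZMod m} (hw : f w = r l) : ∃ z ∈ center G, w = a ^ l.val * z :=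
    ⟨(a ^ l.val)⁻¹ * w, hker ▸ by simp [MonoidHom.mem_ker, ha, hw], by group⟩
  obtain ⟨z, hz, rfl⟩ := hdecomp hx
  obtain ⟨z', hz', rfl⟩ := hdecomp hy
  have central {c : G} (hc : c ∈ center G) (g : G) : Commute g c := mem_center_iff.mp hc g
  exact ((Commute.pow_pow_self a _ _).mul_right (central hz' _)).mul_left
    ((central hz _).symm.mul_right (central hz' _))

theorem not_commute_of_map_eq_r_of_map_eq_sr [NeZero m] (hker : f.ker = center G)
    (hsurj : Function.Surjective f) {x y : G} {j i : ZMod m} (hxZ : x ∉ center G)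
    (hx : f x = r j) (hy : f y = sr i) : ¬Commute x y := by
  refine fun hxy => hxZ (mem_center_iff.mpr fun g => ?_)
  suffices Commute x g from this.symm.eq
  cases hg : f g with
  | r k => exact commute_of_map_eq_r hker hsurj hx hg
  | sr k =>
    have hgy : f (g * y⁻¹) = r (i - k) := by simp [hg, hy, inv_sr]
    simpa using (commute_of_map_eq_r hker hsurj hx hgy).mul_right hxy

theorem not_commute_of_map_eq_sr_of_ne [NeZero m] (hker : f.ker = center G)
    (hsurj : Function.Surjective f) {x y : G} {i k : ZMod m} (hx : f x = sr i)
    (hy : f y = sr k) (hik : i ≠ k) : ¬Commute x y := by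
  intro hxy
  have hxy_map : f (x * y) = r (k - i) := by simp [hx, hy]
  have hxyZ : x * y ∉ center G := by
    rw [← hker, MonoidHom.mem_ker, hxy_map, one_def]
    exact fun h => hik (sub_eq_zero.mp (r.inj h)).symm
  exact not_commute_of_map_eq_r_of_map_eq_sr hker hsurj hxyZ hxy_map hx
    ((Commute.refl x).mul_right hxy).symm

theorem commute_iff_reflectionIndex_eq [NeZero m] (hker : f.ker = center G)
    (hsurj : Function.Surjective f) {x y : G} (hx : x ∉ center G) (hy : y ∉ center G) :
    Commute x y ↔ reflectionIndex (f x) = reflectionIndex (f y) := by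
  cases hfx : f x with
  | r j =>
    cases hfy : f y with
    | r k => simpa [reflectionIndex] using commute_of_map_eq_r hker hsurj hfx hfy
    | sr i =>
      simpa [reflectionIndex] using not_commute_of_map_eq_r_of_map_eq_sr hker hsurj hx hfx hfy
  | sr i =>
    cases hfy : f y with
    | r k =>
      simpa [reflectionIndex, Commute.symm_iff (a := x)] using
        not_commute_of_map_eq_r_of_map_eq_sr hker hsurj hy hfy hfx
    | sr k =>
      by_cases hik : i = k
      · subst hik
        simpa [reflectionIndex] using commute_of_map_eq hker (hfx.trans hfy.symm)
      · simpa [reflectionIndex, hik] using not_commute_of_map_eq_sr_of_ne hker hsurj hfx hfy hik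

end CentralQuotientDihedral

section CentralQuotientDihedralCount

open DihedralGroup Subgroup Finset

variable {m : ℕ} {G : Type*} [Group G] {f : G →* DihedralGroup m}

theorem card_eq_two_mul_mul_card_center (hker : f.ker = center G)
    (hsurj : Function.Surjective f) : Nat.card G = 2 * m * Nat.card (center G) := by
  rw [← f.ker.card_mul_index, Subgroup.index_ker, MonoidHom.range_eq_top.mpr hsurj,
    card_top, DihedralGroup.nat_card, hker, mul_comm]

variable [Fintype G]

theorem card_filter_map_eq_card_center (hker : f.ker = center G) (hsurj : Function.Surjective f)
    (d : DihedralGroup m) : #{x | f x = d} = Nat.card (center G) := by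
  classical
  rw [MonoidHom.card_fiber_eq_of_mem_range f (hsurj d) (hsurj 1), ← hker,
    Nat.card_eq_fintype_card, ← Fintype.card_subtype]
  simp [MonoidHom.mem_ker]

theorem card_noncenter_eq (hker : f.ker = center G) (hsurj : Function.Surjective f)
    [Fintype {x : G // x ∉ center G}] :
    Fintype.card {x : G // x ∉ center G} = (2 * m - 1) * Nat.card (center G) := by
  classical
  rw [Fintype.card_subtype_compl, ← Nat.card_eq_fintype_card, ← Nat.card_eq_fintype_card,
    card_eq_two_mul_mul_card_center hker hsurj, Nat.sub_mul, one_mul]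

theorem card_filter_noncenter_reflectionIndex_eq_some (hker : f.ker = center G)
    (hsurj : Function.Surjective f) [Fintype {x : G // x ∉ center G}] (i : ZMod m) :
    #{v : {x : G // x ∉ center G} | reflectionIndex (f v) = some i} = Nat.card (center G) := by
  rw [← card_filter_map_eq_card_center hker hsurj (sr i)]
  refine card_bij (fun v _ => v.1) (fun v hv => ?_) (fun v _ w _ h => Subtype.ext h) fun x hx => ?_
  · simpa [reflectionIndex_eq_some_iff] using hv
  · have hfx : f x = sr i := (mem_filter.mp hx).2
    have hxZ : x ∉ center G := by
      rw [← hker, MonoidHom.mem_ker, hfx, one_def]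
      exact fun h => by cases h
    exact ⟨⟨x, hxZ⟩, by simpa [reflectionIndex_eq_some_iff] using hfx, rfl⟩

theorem card_filter_noncenter_reflectionIndex_eq_none (hker : f.ker = center G)
    (hsurj : Function.Surjective f) [Fintype {x : G // x ∉ center G}] [NeZero m] :
    #{v : {x : G // x ∉ center G} | reflectionIndex (f v) = none} =
      (m - 1) * Nat.card (center G) := by
  have hsum := card_eq_sum_card_fiberwise (s := univ) (t := univ)
    (f := fun v : {x : G // x ∉ center G} => reflectionIndex (f v)) fun _ _ => mem_univ _
  rw [card_univ, card_noncenter_eq hker hsurj, Fintype.sum_option] at hsum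
  simp only [card_filter_noncenter_reflectionIndex_eq_some hker hsurj, sum_const, card_univ,
    ZMod.card, smul_eq_mul] at hsum
  have hsplit : (2 * m - 1) * Nat.card (center G) =
      m * Nat.card (center G) + (m - 1) * Nat.card (center G) := by
    rw [← Nat.add_mul]; congr 1; omega
  omega

theorem surjective_reflectionIndex_noncenter (hm : 2 ≤ m) (hker : f.ker = center G)
    (hsurj : Function.Surjective f) [Fintype {x : G // x ∉ center G}] :
    Function.Surjective fun v : {x : G // x ∉ center G} => reflectionIndex (f v) := by
  have : NeZero m := ⟨by omega⟩
  intro c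
  have hpos : 0 < #{v : {x : G // x ∉ center G} | reflectionIndex (f v) = c} := by
    cases c
    · rw [card_filter_noncenter_reflectionIndex_eq_none hker hsurj]
      exact Nat.mul_pos (by omega) Nat.card_pos
    · rw [card_filter_noncenter_reflectionIndex_eq_some hker hsurj]
      exact Nat.card_pos
  obtain ⟨v, hv⟩ := card_pos.mp hpos
  exact ⟨v, (mem_filter.mp hv).2⟩

end CentralQuotientDihedralCount

open Subgroup in
theorem ncCharpoly_eq_charpoly_lapMatrix (G : Type*) [Group G] [Fintype G]
    [Fintype {x : G // x ∉ center G}] [DecidableEq {x : G // x ∉ center G}]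
    [DecidableRel (nonCommGraph G).Adj] :
    ncCharpoly G = ((nonCommGraph G).lapMatrix ℝ).charpoly := by
  unfold ncCharpoly ncLap
  congr!

/-- Laplacian spectrum of the non-commuting graph of a finite group
`G` with `G/Z(G) ≅ D_{2m}`, `m ≥ 2`. -/
theorem laplacian_spectrum_nc_graph_central_factor_dihedral
    (m : ℕ) (hm : 2 ≤ m) (G : Type*) [Group G] [Fintype G]
    (h : Nonempty ((G ⧸ Subgroup.center G) ≃* DihedralGroup m)) :
    ncCharpoly G =
      X *
      (X - C ((m : ℝ) * (Nat.card (Subgroup.center G) : ℝ))) ^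
        ((m - 1) * Nat.card (Subgroup.center G) - 1) *
      (X - C (2 * ((m : ℝ) - 1) * (Nat.card (Subgroup.center G) : ℝ))) ^
        (m * Nat.card (Subgroup.center G) - m) *
      (X - C ((2 * (m : ℝ) - 1) * (Nat.card (Subgroup.center G) : ℝ))) ^ m := by
  classical
  obtain ⟨φ⟩ := h
  have : NeZero m := ⟨by omega⟩
  set f : G →* DihedralGroup m := φ.toMonoidHom.comp (QuotientGroup.mk' (Subgroup.center G))
  have hker : f.ker = Subgroup.center G := by ext; simp [f]
  have hsurj : Function.Surjective f := φ.surjective.comp (QuotientGroup.mk'_surjective _)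
  have hP := surjective_reflectionIndex_noncenter hm hker hsurj
  rw [ncCharpoly_eq_charpoly_lapMatrix, SimpleGraph.charpoly_lapMatrix_of_adj_iff_ne _ hP
    fun v w => (commute_iff_reflectionIndex_eq hker hsurj v.2 w.2).not, Fintype.prod_option,
    card_filter_noncenter_reflectionIndex_eq_none hker hsurj]
  simp only [card_filter_noncenter_reflectionIndex_eq_some hker hsurj, Finset.prod_const,
    Finset.card_univ, ZMod.card, Fintype.card_option, card_noncenter_eq hker hsurj]
  set n := Nat.card (Subgroup.center G)
  have hN : (((2 * m - 1) * n : ℕ) : ℝ) = (2 * m - 1) * n := by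
    push_cast [Nat.cast_sub (by omega : 1 ≤ 2 * m)]; ring
  have hNm : (((2 * m - 1) * n : ℕ) : ℝ) - ((m - 1) * n : ℕ) = m * n := by
    push_cast [Nat.cast_sub (by omega : 1 ≤ 2 * m), Nat.cast_sub (by omega : 1 ≤ m)]; ring
  have hNn : (((2 * m - 1) * n : ℕ) : ℝ) - n = 2 * (m - 1) * n := by
    rw [hN]; ring
  rw [hNm, hNn, hN, Nat.add_sub_cancel, ← pow_mul, Nat.sub_one_mul n m, mul_comm n m]
  ring
end

section
/- Let G be a finite non-abelian group and let {x₁, x₂, …, x_r} be a set of pairwise non-commuting elements of G of maximal size (i.e. x_i x_j ≠ x_j x_i for all i ≠ j, and no set of pairwise non-commuting elements of G has more than r elements). If r = 3 or r = 4, then the non-commuting graph 𝒜_G is L-integral. -/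
open Polynomial

/-!
If no five elements of `G` pairwise fail to commute, commuting is transitive on non-central
elements. Indeed, let a non-central `b` commute with `a` and `c` where `ac ≠ ca`. Then `a`, `c`,
`ac` pairwise do not commute, and any `y` commutes with both or with neither of two of them; in
either case explicit five-element non-commuting sets built from `b`, `y` and that pair force `b`
and `y` to commute, so `b` would be central. Hence the non-commuting graph is complete
multipartite. For such a graph, a Laplacian eigenvector whose eigenvalue is not `0`, `n` or a
vertex degree is constant on each part, then constant, then zero; so the spectrum is integral.
-/

open Finset Matrix

theorem Matrix.exists_mulVec_eq_smul_of_mem_spectrum {n K : Type*} [Fintype n] [DecidableEq n]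
    [Field K] {A : Matrix n n K} {μ : K} (hμ : μ ∈ spectrum K A) :
    ∃ v ≠ 0, A *ᵥ v = μ • v := by
  rw [← Matrix.spectrum_toLin', ← Module.End.hasEigenvalue_iff_mem_spectrum] at hμ
  obtain ⟨v, hv, hv0⟩ := hμ.exists_hasEigenvector
  exact ⟨v, hv0, by simpa using Module.End.mem_eigenspace_iff.1 hv⟩

namespace SimpleGraph

variable {V K : Type*} [Fintype V] [Field K] {G : SimpleGraph V} [DecidableRel G.Adj]

lemma IsCompleteMultipartite.neighborFinset_eq_of_not_adj (hG : G.IsCompleteMultipartite)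
    {x y : V} (hxy : ¬ G.Adj x y) : G.neighborFinset y = G.neighborFinset x := by
  ext z
  simp only [mem_neighborFinset]
  exact ⟨not_imp_not.1 (hG.trans y x z fun h => hxy h.symm), not_imp_not.1 (hG.trans x y z hxy)⟩

lemma IsCompleteMultipartite.eq_zero_of_lapMatrix_mulVec_eq_smul [DecidableEq V]
    (hG : G.IsCompleteMultipartite) {μ : K} {v : V → K} (hv : G.lapMatrix K *ᵥ v = μ • v)
    (h0 : μ ≠ 0) (hn : μ ≠ Fintype.card V) (hdeg : ∀ x, μ ≠ G.degree x) : v = 0 := by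
  have hrow (x : V) : (G.degree x - μ) * v x = ∑ u ∈ G.neighborFinset x, v u := by
    have := congrFun hv x
    rw [lapMatrix_mulVec_apply, Pi.smul_apply, smul_eq_mul] at this
    linear_combination this
  have hpart (x y : V) (hxy : ¬ G.Adj x y) : v y = v x := by
    refine mul_left_cancel₀ (sub_ne_zero.2 (hdeg x).symm) ?_
    rw [hrow x, ← card_neighborFinset_eq_degree, ← hG.neighborFinset_eq_of_not_adj hxy,
      card_neighborFinset_eq_degree, hrow y]
  have hsum (x : V) : (Fintype.card V - μ) * v x = ∑ y, v y := by
    have hcompl : ∑ y ∈ (G.neighborFinset x)ᶜ, v y = (G.neighborFinset x)ᶜ.card * v x := by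
      rw [← nsmul_eq_mul, ← sum_const]
      exact sum_congr rfl fun y hy => hpart x y (by simpa using hy)
    have hcard : ((G.neighborFinset x)ᶜ.card : K) + G.degree x = Fintype.card V := by
      rw [← card_neighborFinset_eq_degree, ← Nat.cast_add, card_compl_add_card]
    rw [← sum_compl_add_sum (G.neighborFinset x), hcompl, ← hrow x, ← hcard]
    ring
  have hconst (x y : V) : v x = v y :=
    mul_left_cancel₀ (sub_ne_zero.2 hn.symm) ((hsum x).trans (hsum y).symm)
  funext x
  have : μ * v x = 0 := by
    have := hsum x
    rw [sum_congr rfl fun y _ => hconst y x, sum_const, card_univ, nsmul_eq_mul] at this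
    linear_combination -this
  exact (mul_eq_zero.1 this).resolve_left h0

theorem IsCompleteMultipartite.mem_spectrum_lapMatrix [DecidableEq V]
    (hG : G.IsCompleteMultipartite) {μ : K} (hμ : μ ∈ spectrum K (G.lapMatrix K)) :
    μ = 0 ∨ μ = Fintype.card V ∨ ∃ x, μ = G.degree x := by
  by_contra! ⟨h0, hn, hdeg⟩
  obtain ⟨v, hv0, hv⟩ := Matrix.exists_mulVec_eq_smul_of_mem_spectrum hμ
  exact hv0 (hG.eq_zero_of_lapMatrix_mulVec_eq_smul hv h0 hn hdeg)

end SimpleGraph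

section

variable {G : Type*} [Group G] {a b c : G}

theorem Commute.mul_right_iff_of_right (hc : Commute a c) : Commute a (b * c) ↔ Commute a b :=
  ⟨fun h => by simpa using h.mul_right hc.inv_right, fun h => h.mul_right hc⟩

theorem Commute.mul_right_iff_of_left (hb : Commute a b) : Commute a (b * c) ↔ Commute a c :=
  ⟨fun h => by simpa using hb.inv_right.mul_right h, hb.mul_right⟩

theorem Commute.mul_left_iff_of_right (hb : Commute b c) : Commute (a * b) c ↔ Commute a c := by
  rw [Commute.symm_iff, hb.symm.mul_right_iff_of_right, Commute.symm_iff]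

theorem Commute.mul_left_iff_of_left (ha : Commute a c) : Commute (a * b) c ↔ Commute b c := by
  rw [Commute.symm_iff, ha.symm.mul_right_iff_of_left, Commute.symm_iff]

end

def NonCommutingBound (G : Type*) [Group G] (k : ℕ) : Prop :=
  ∀ t : Finset G, (t : Set G).Pairwise (fun x y => ¬ Commute x y) → t.card ≤ k

namespace NonCommutingBound

variable {G : Type*} [Group G]

theorem false_of_five (hG : NonCommutingBound G 4) {e₁ e₂ e₃ e₄ e₅ : G}
    (h₁₂ : ¬ Commute e₁ e₂) (h₁₃ : ¬ Commute e₁ e₃) (h₁₄ : ¬ Commute e₁ e₄)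
    (h₁₅ : ¬ Commute e₁ e₅) (h₂₃ : ¬ Commute e₂ e₃) (h₂₄ : ¬ Commute e₂ e₄)
    (h₂₅ : ¬ Commute e₂ e₅) (h₃₄ : ¬ Commute e₃ e₄) (h₃₅ : ¬ Commute e₃ e₅)
    (h₄₅ : ¬ Commute e₄ e₅) : False := by
  classical
  have hne {x y : G} (h : ¬ Commute x y) : x ≠ y := fun hxy => h (hxy ▸ Commute.refl x)
  have hcard : ({e₁, e₂, e₃, e₄, e₅} : Finset G).card = 5 := by
    simp [Finset.card_insert_of_notMem, *]
  have := hG {e₁, e₂, e₃, e₄, e₅} (by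
    have : Std.Symm (fun x y : G => ¬ Commute x y) := ⟨fun x y h h' => h h'.symm⟩
    simp [Set.pairwise_insert_of_symm, *])
  omega

theorem commute_of_both_commute (hG : NonCommutingBound G 4) {u v b y : G}
    (huv : ¬ Commute u v) (hbu : Commute b u) (hbv : Commute b v) (hyu : Commute y u)
    (hyv : Commute y v) : Commute b y := by
  by_contra hby
  -- `simp` checks the ten non-commutations by cancelling factors known to commute
  refine hG.false_of_five (e₁ := u) (e₂ := u * v) (e₃ := b * v) (e₄ := y * v)
    (e₅ := b * (y * v)) ?_ ?_ ?_ ?_ ?_ ?_ ?_ ?_ ?_ ?_ <;>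
  simp [Commute.mul_right_iff_of_left, Commute.mul_right_iff_of_right,
    Commute.mul_left_iff_of_right, hbu.symm, hbv.symm, hyu.symm, hyv.symm, mt Commute.symm hby, *]

theorem commute_of_neither_commute (hG : NonCommutingBound G 4) {p q b y : G}
    (hpq : ¬ Commute p q) (hbp : Commute b p) (hbq : Commute b q) (hyp : ¬ Commute y p)
    (hyq : ¬ Commute y q) : Commute b y := by
  by_contra hby
  by_cases hypq : Commute y (p * q)
  · refine hG.false_of_five (e₁ := p) (e₂ := q) (e₃ := y) (e₄ := y * b) (e₅ := p * q * b)
      ?_ ?_ ?_ ?_ ?_ ?_ ?_ ?_ ?_ ?_ <;>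
    simp [Commute.mul_right_iff_of_left, Commute.mul_right_iff_of_right,
      Commute.mul_left_iff_of_right, Commute.mul_left_iff_of_left, hbp.symm, hbq.symm,
      mt Commute.symm hpq, mt Commute.symm hyp, mt Commute.symm hyq, mt Commute.symm hby, *]
  · refine hG.false_of_five (e₁ := p) (e₂ := q) (e₃ := p * q) (e₄ := y) (e₅ := y * b)
      ?_ ?_ ?_ ?_ ?_ ?_ ?_ ?_ ?_ ?_ <;>
    simp [Commute.mul_right_iff_of_left, Commute.mul_right_iff_of_right, hbp.symm, hbq.symm,
      mt Commute.symm hpq, mt Commute.symm hyp, mt Commute.symm hyq, mt Commute.symm hby,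
      mt Commute.symm hypq, *]

theorem commute_of_commute_iff_commute (hG : NonCommutingBound G 4) {p q b y : G}
    (hpq : ¬ Commute p q) (hbp : Commute b p) (hbq : Commute b q)
    (hy : Commute y p ↔ Commute y q) : Commute b y := by
  by_cases hyp : Commute y p
  · exact hG.commute_of_both_commute hpq hbp hbq hyp (hy.1 hyp)
  · exact hG.commute_of_neither_commute hpq hbp hbq hyp (mt hy.2 hyp)

theorem commute_of_commute_of_notMem_center (hG : NonCommutingBound G 4) {a b c : G}
    (hb : b ∉ Subgroup.center G) (hba : Commute b a) (hbc : Commute b c) : Commute a c := by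
  by_contra hac
  refine hb (Subgroup.mem_center_iff.2 fun y => (?_ : Commute b y).symm.eq)
  have hbac : Commute b (a * c) := hba.mul_right hbc
  have ha : ¬ Commute a (a * c) := mt (Commute.refl a).mul_right_iff_of_left.1 hac
  have hc : ¬ Commute c (a * c) := fun h => hac ((Commute.refl c).mul_right_iff_of_right.1 h).symm
  have : (Commute y a ↔ Commute y c) ∨ (Commute y a ↔ Commute y (a * c)) ∨
      (Commute y c ↔ Commute y (a * c)) := by
    tauto
  rcases this with h | h | h
  exacts [hG.commute_of_commute_iff_commute hac hba hbc h,
    hG.commute_of_commute_iff_commute ha hba hbac h,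
    hG.commute_of_commute_iff_commute hc hbc hbac h]

theorem isCompleteMultipartite_nonCommGraph (hG : NonCommutingBound G 4) :
    (nonCommGraph G).IsCompleteMultipartite :=
  ⟨fun _ y _ hxy hyz => not_not.2 <|
    hG.commute_of_commute_of_notMem_center y.2 (not_not.1 hxy).symm (not_not.1 hyz)⟩

end NonCommutingBound

theorem nc_graph_LIntegral_of_max_noncommuting_three_or_four_general
    (G : Type*) [Group G] [Fintype G]
    (s : Finset G)
    (hmax : ∀ t : Finset G, (∀ x ∈ t, ∀ y ∈ t, x ≠ y → x * y ≠ y * x) → t.card ≤ s.card)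
    (hr : s.card = 3 ∨ s.card = 4) :
    ncLIntegral G := by
  have hG : (nonCommGraph G).IsCompleteMultipartite :=
    NonCommutingBound.isCompleteMultipartite_nonCommGraph fun t ht => (hmax t ht).trans (by omega)
  -- the instances `ncLap` is built with
  let := Classical.decEq G
  let : DecidablePred (fun x : G => x ∉ Subgroup.center G) := fun _ => Classical.dec _
  let : DecidableRel (nonCommGraph G).Adj := fun _ _ => Classical.dec _
  intro μ hμ
  rcases hG.mem_spectrum_lapMatrix hμ with rfl | rfl | ⟨x, rfl⟩
  exacts [⟨0, by simp⟩, ⟨_, Int.cast_natCast _⟩, ⟨_, Int.cast_natCast _⟩]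

/-- If a maximal-size set of pairwise non-commuting elements of a
finite non-abelian group `G` has size `3` or `4`, then the non-commuting graph of `G`
is L-integral. -/
theorem nc_graph_LIntegral_of_max_noncommuting_three_or_four
    (G : Type*) [Group G] [Fintype G]
    (hna : ¬ ∀ a b : G, a * b = b * a)
    (s : Finset G)
    (hs : ∀ x ∈ s, ∀ y ∈ s, x ≠ y → x * y ≠ y * x)
    (hmax : ∀ t : Finset G, (∀ x ∈ t, ∀ y ∈ t, x ≠ y → x * y ≠ y * x) → t.card ≤ s.card)
    (hr : s.card = 3 ∨ s.card = 4) :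
    ncLIntegral G :=
  nc_graph_LIntegral_of_max_noncommuting_three_or_four_general G s hmax hr
end

section
/- Let G be a finite group and let p be the smallest prime divisor of |G|. If the commuting probability of G satisfies Pr(G) = (p² + p − 1)/p³, then the non-commuting graph 𝒜_G is L-integral. -/
open Polynomial

/-! If no prime below `p` divides `|G|`, every proper subgroup has index at least `p`, so
`Pr(G) = |G|⁻¹ ∑ₓ [G : C(x)]⁻¹ ≤ 1/p + (1 - 1/p)/[G : Z(G)]`; as `G/Z(G)` is never cyclic of
prime order, `[G : Z(G)] ≥ p²` for nonabelian `G`. The hypothesis is exactly the resulting bound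
`(p² + p - 1)/p³`, so `[G : Z(G)] = p²`. Then every noncentral centralizer `C(x)` contains `Z(G)`
with index `p`, hence is abelian, so commuting is transitive on noncentral elements and the
non-commuting graph is complete multipartite with parts `C(x) \ Z(G)` of equal size
`m = (p - 1)|Z(G)|`. The Laplacian `L` of such a graph on `n` vertices satisfies
`L (L - n) (L - (n - m)) = 0`, so its eigenvalues lie in `{0, n, n - m}`. -/

open Subgroup

theorem Nat.le_of_dvd_of_forall_prime_dvd_le {p n d : ℕ}
    (hmin : ∀ q : ℕ, q.Prime → q ∣ n → p ≤ q) (hn : n ≠ 0) (hd : d ∣ n) (hd1 : d ≠ 1) :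
    p ≤ d :=
  (hmin _ (minFac_prime hd1) ((minFac_dvd d).trans hd)).trans
    (minFac_le (pos_of_ne_zero (ne_zero_of_dvd_ne_zero hn hd)))

namespace Subgroup

variable {G : Type*} [Group G]

theorem index_center_not_prime : ¬ (center G).index.Prime := by
  intro hprime
  have : Fact (center G).index.Prime := ⟨hprime⟩
  have : IsCyclic (G ⧸ center G) := isCyclic_of_prime_card (index_eq_card _).symm
  have : IsMulCommutative G := isMulCommutative_of_isCyclic_quotient_center_self G
  rw [index_eq_one.mpr center_eq_top] at hprime
  exact Nat.not_prime_one hprime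

theorem centralizer_singleton_ne_top {x : G} (hx : x ∉ center G) : centralizer {x} ≠ ⊤ :=
  fun h => hx (Set.singleton_subset_iff.mp (centralizer_eq_top_iff_subset.mp h))

theorem commute_of_relIndex_center_prime {H : Subgroup G}
    (hH : ((center G).relIndex H).Prime) {a b : G} (ha : a ∈ H) (hb : b ∈ H) : Commute a b := by
  have : Fact ((center G).subgroupOf H).index.Prime := ⟨hH⟩
  have : IsCyclic (H ⧸ (center G).subgroupOf H) := isCyclic_of_prime_card (index_eq_card _).symm
  have hker : (QuotientGroup.mk' ((center G).subgroupOf H)).ker ≤ center H := by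
    rw [QuotientGroup.ker_mk']
    exact fun c hc => mem_center_iff.mpr fun d => Subtype.ext (mem_center_iff.mp hc d)
  have := MonoidHom.isMulCommutative_of_isCyclic_of_ker_le_center _ hker
  exact congrArg Subtype.val (mul_comm' (⟨a, ha⟩ : H) ⟨b, hb⟩)

variable [Finite G] {p : ℕ}

theorem le_index_of_ne_top (hmin : ∀ q : ℕ, q.Prime → q ∣ Nat.card G → p ≤ q)
    {H : Subgroup G} (hH : H ≠ ⊤) : p ≤ H.index :=
  Nat.le_of_dvd_of_forall_prime_dvd_le hmin Nat.card_pos.ne' H.index_dvd_card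
    (mt index_eq_one.mp hH)

theorem sq_le_index_center (hmin : ∀ q : ℕ, q.Prime → q ∣ Nat.card G → p ≤ q)
    (hZ : center G ≠ ⊤) : p ^ 2 ≤ (center G).index := by
  set i := (center G).index
  have hi : i ≠ 1 := mt index_eq_one.mp hZ
  obtain ⟨r, hr⟩ := Nat.minFac_dvd i
  have hr1 : r ≠ 1 := by
    rintro rfl
    apply index_center_not_prime (G := G)
    change i.Prime
    rw [hr, mul_one]
    exact Nat.minFac_prime hi
  have hle : ∀ d, d ∣ i → d ≠ 1 → p ≤ d := fun d hd =>
    Nat.le_of_dvd_of_forall_prime_dvd_le hmin Nat.card_pos.ne' (hd.trans (index_dvd_card _))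
  calc p ^ 2 = p * p := sq p
    _ ≤ i.minFac * r := Nat.mul_le_mul (hle _ (Nat.minFac_dvd i) (Nat.minFac_prime hi).ne_one)
        (hle r (Dvd.intro_left _ hr.symm) hr1)
    _ = i := hr.symm

end Subgroup

section CommProb

variable {G : Type*} [Group G] [Fintype G]

theorem card_commute_eq_sum_card_centralizer :
    Nat.card {q : G × G // Commute q.1 q.2} = ∑ x : G, Nat.card (centralizer {x}) := by
  classical
  rw [Nat.card_congr (Equiv.subtypeProdEquivSigmaSubtype fun a b : G => Commute a b),
    Nat.card_eq_fintype_card, Fintype.card_sigma]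
  refine Finset.sum_congr rfl fun x _ => ?_
  rw [← Nat.card_eq_fintype_card]
  exact Nat.card_congr <| Equiv.subtypeEquivRight fun y => by
    rw [mem_centralizer_singleton_iff, Commute, SemiconjBy, eq_comm]

theorem commProb_eq_sum_inv_index_centralizer :
    commProb G = (∑ x : G, ((centralizer {x}).index : ℚ)⁻¹) / Nat.card G := by
  have hg : (Nat.card G : ℚ) ≠ 0 := Nat.cast_ne_zero.mpr Nat.card_pos.ne'
  rw [commProb_def, card_commute_eq_sum_card_centralizer, Nat.cast_sum, sq, ← div_div,
    Finset.sum_div]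
  congr 1
  refine Finset.sum_congr rfl fun x _ => ?_
  have hx := congrArg (Nat.cast (R := ℚ)) (centralizer {x}).card_mul_index
  have hi : ((centralizer {x}).index : ℚ) ≠ 0 :=
    Nat.cast_ne_zero.mpr (centralizer {x}).index_ne_zero_of_finite
  push_cast at hx
  rw [div_eq_iff hg, ← hx]
  field_simp

theorem commProb_le_of_le_index {p : ℕ} (hp : 0 < p)
    (hindex : ∀ H : Subgroup G, H ≠ ⊤ → p ≤ H.index) :
    commProb G ≤ 1 / p + (1 - 1 / p) / (center G).index := by
  classical
  have hpoint : ∀ x : G, ((centralizer {x}).index : ℚ)⁻¹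
      ≤ 1 / p + (1 - 1 / p) * if x ∈ center G then 1 else 0 := by
    intro x
    by_cases hx : x ∈ center G
    · have : centralizer {x} = ⊤ :=
        centralizer_eq_top_iff_subset.mpr (Set.singleton_subset_iff.mpr hx)
      simp [hx, this]
    · rw [if_neg hx, mul_zero, add_zero, one_div]
      exact inv_anti₀ (by exact_mod_cast hp)
        (by exact_mod_cast hindex _ (centralizer_singleton_ne_top hx))
  have hsum : ∑ x : G, (1 / p + (1 - 1 / p) * if x ∈ center G then 1 else 0 : ℚ)
      = Nat.card G / p + (1 - 1 / p) * Nat.card (center G) := by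
    rw [Finset.sum_add_distrib, ← Finset.mul_sum, Finset.sum_boole]
    simp [Nat.card_eq_fintype_card, Fintype.card_subtype, div_eq_mul_inv, mul_comm]
  have hzi := congrArg (Nat.cast (R := ℚ)) (center G).card_mul_index
  have hi : ((center G).index : ℚ) ≠ 0 := Nat.cast_ne_zero.mpr (center G).index_ne_zero_of_finite
  push_cast at hzi
  calc commProb G ≤ (Nat.card G / p + (1 - 1 / p) * Nat.card (center G)) / Nat.card G := by
        rw [commProb_eq_sum_inv_index_centralizer, ← hsum]
        gcongr with x
        exact hpoint x
    _ = 1 / p + (1 - 1 / p) / (center G).index := by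
        rw [← hzi]
        field_simp

theorem index_center_eq_sq_of_commProb_eq {p : ℕ} (hp : p.Prime)
    (hmin : ∀ q : ℕ, q.Prime → q ∣ Nat.card G → p ≤ q)
    (h : commProb G = ((p : ℚ) ^ 2 + p - 1) / p ^ 3) :
    (center G).index = p ^ 2 := by
  have hp2 : (2 : ℚ) ≤ p := by exact_mod_cast hp.two_le
  have hZ : center G ≠ ⊤ := by
    intro hZ
    rw [commProb_eq_one_iff.mpr (center_eq_top_iff.mp hZ), eq_div_iff (by positivity)] at h
    nlinarith
  refine le_antisymm (not_lt.mp fun hlt => ?_) (sq_le_index_center hmin hZ)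
  have hbound := commProb_le_of_le_index hp.pos fun H hH => le_index_of_ne_top hmin hH
  have hlt' : ((p : ℚ) ^ 2) < (center G).index := by exact_mod_cast hlt
  have : (1 - 1 / p : ℚ) / (center G).index < (1 - 1 / p) / p ^ 2 := by
    gcongr
    rw [sub_pos, div_lt_one (by positivity)]
    linarith
  have : ((p : ℚ) ^ 2 + p - 1) / p ^ 3 = 1 / p + (1 - 1 / p) / p ^ 2 := by field_simp; ring
  linarith

end CommProb

section IndexCenterSq

variable {G : Type*} [Group G] {p : ℕ}

theorem relIndex_center_centralizer_eq_of_index_center_eq_sq (hp : p.Prime)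
    (hZ : (center G).index = p ^ 2) {x : G} (hx : x ∉ center G) :
    (center G).relIndex (centralizer {x}) = p := by
  have hmul := relIndex_mul_index (center_le_centralizer ({x} : Set G))
  rw [hZ] at hmul
  obtain ⟨k, hk, hrk⟩ := (Nat.dvd_prime_pow hp).mp (Dvd.intro _ hmul)
  have hr1 : (center G).relIndex (centralizer {x}) ≠ 1 := fun h =>
    hx (relIndex_eq_one.mp h (mem_centralizer_singleton_iff.mpr rfl))
  have hi1 : (centralizer {x}).index ≠ 1 := mt index_eq_one.mp (centralizer_singleton_ne_top hx)
  interval_cases k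
  · exact absurd hrk hr1
  · simpa using hrk
  · rw [hrk, mul_eq_left₀ (pow_ne_zero 2 hp.ne_zero)] at hmul
    exact absurd hmul hi1

theorem commute_of_index_center_eq_sq (hp : p.Prime) (hZ : (center G).index = p ^ 2)
    {x a b : G} (hx : x ∉ center G) (ha : Commute x a) (hb : Commute x b) : Commute a b := by
  refine commute_of_relIndex_center_prime ?_ (mem_centralizer_singleton_iff.mpr ha.eq.symm)
    (mem_centralizer_singleton_iff.mpr hb.eq.symm)
  rw [relIndex_center_centralizer_eq_of_index_center_eq_sq hp hZ hx]
  exact hp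

theorem card_centralizer_eq_of_index_center_eq_sq [Finite G] (hp : p.Prime)
    (hZ : (center G).index = p ^ 2) {x : G} (hx : x ∉ center G) :
    Nat.card (centralizer {x}) = p * Nat.card (center G) := by
  have hC := relIndex_mul_index (center_le_centralizer ({x} : Set G))
  rw [relIndex_center_centralizer_eq_of_index_center_eq_sq hp hZ hx, hZ, sq,
    Nat.mul_right_inj hp.ne_zero] at hC
  have h1 := (centralizer ({x} : Set G)).card_mul_index
  rw [← (center G).card_mul_index, hZ, hC, sq, ← mul_assoc, Nat.mul_left_inj hp.ne_zero] at h1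
  rw [h1, mul_comm]

end IndexCenterSq

theorem card_noncentral_commute_add_card_center {G : Type*} [Group G] [Finite G] (v : G) :
    Nat.card {w : {x : G // x ∉ center G} // Commute v w} + Nat.card (center G)
      = Nat.card (centralizer {v}) := by
  have hdiff : Nat.card {w : {x : G // x ∉ center G} // Commute v w}
      = Nat.card ↥((centralizer {v} : Set G) \ center G) :=
    Nat.card_congr <| (Equiv.subtypeSubtypeEquivSubtypeInter _ _).trans <|
      Equiv.subtypeEquivRight fun y => by
        rw [Set.mem_sdiff, SetLike.mem_coe, mem_centralizer_singleton_iff, Commute, SemiconjBy,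
          eq_comm, and_comm]; rfl
  rw [hdiff, Nat.card_coe_set_eq, ← SetLike.coe_sort_coe, ← SetLike.coe_sort_coe,
    Nat.card_coe_set_eq, Nat.card_coe_set_eq]
  exact Set.ncard_sdiff_add_ncard_of_subset (center_le_centralizer _)

theorem spectrum.eval_eq_zero_of_aeval_eq_zero {𝕜 A : Type*} [Field 𝕜] [Ring A] [Algebra 𝕜 A]
    {a : A} {P : 𝕜[X]} (hP : aeval a P = 0) {μ : 𝕜} (hμ : μ ∈ spectrum 𝕜 a) : P.eval μ = 0 := by
  have hmem := spectrum.subset_polynomial_aeval a P ⟨μ, hμ, rfl⟩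
  rw [hP, spectrum.mem_iff, sub_zero] at hmem
  by_contra hne
  exact hmem ((isUnit_iff_ne_zero.mpr hne).map _)

namespace SimpleGraph

variable {V : Type*} (G : SimpleGraph V) [DecidableRel G.Adj] (R : Type*)

def nonAdjMatrix [Zero R] [One R] : Matrix V V R :=
  Matrix.of fun v w => if G.Adj v w then 0 else 1

variable {G R} [CommRing R]

theorem adjMatrix_eq_sub_nonAdjMatrix :
    G.adjMatrix R = Matrix.of (fun _ _ => 1) - G.nonAdjMatrix R := by
  ext v w
  by_cases h : G.Adj v w <;> simp [nonAdjMatrix, h]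

variable [Fintype V] {m : ℕ}

theorem sum_nonAdjMatrix_apply (hpart : ∀ v, Nat.card {w // ¬ G.Adj v w} = m) (v : V) :
    ∑ w, G.nonAdjMatrix R v w = m := by
  classical
  simp only [nonAdjMatrix, Matrix.of_apply]
  rw [← hpart v, Nat.card_eq_fintype_card, Fintype.card_subtype, Finset.sum_ite,
    Finset.sum_const_zero, zero_add, Finset.sum_const, nsmul_one]

theorem nonAdjMatrix_mul_self (h : G.IsCompleteMultipartite)
    (hpart : ∀ v, Nat.card {w // ¬ G.Adj v w} = m) :
    G.nonAdjMatrix R * G.nonAdjMatrix R = (m : R) • G.nonAdjMatrix R := by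
  have hB : ∀ u v w, G.nonAdjMatrix R v u * G.nonAdjMatrix R u w
      = G.nonAdjMatrix R v w * G.nonAdjMatrix R v u := by
    intro u v w
    by_cases hvu : G.Adj v u
    · simp [nonAdjMatrix, hvu]
    · have huv : ¬ G.Adj u v := fun huv => hvu huv.symm
      have : G.Adj u w ↔ G.Adj v w :=
        not_iff_not.mp ⟨h.trans _ _ _ hvu, h.trans _ _ _ huv⟩
      simp [nonAdjMatrix, hvu, this]
  ext v w
  rw [Matrix.mul_apply, Finset.sum_congr rfl fun u _ => hB u v w, ← Finset.mul_sum,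
    sum_nonAdjMatrix_apply hpart, Matrix.smul_apply, smul_eq_mul, mul_comm]

theorem nonAdjMatrix_mul_ones (hpart : ∀ v, Nat.card {w // ¬ G.Adj v w} = m) :
    G.nonAdjMatrix R * Matrix.of (fun _ _ => 1) = (m : R) • Matrix.of (fun _ _ => 1) := by
  ext v w
  simp [Matrix.mul_apply, sum_nonAdjMatrix_apply hpart]

theorem ones_mul_nonAdjMatrix (hpart : ∀ v, Nat.card {w // ¬ G.Adj v w} = m) :
    Matrix.of (fun _ _ => 1) * G.nonAdjMatrix R = (m : R) • Matrix.of (fun _ _ => 1) := by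
  ext v w
  have hsymm : ∀ u, G.nonAdjMatrix R u w = G.nonAdjMatrix R w u := fun u => by
    simp [nonAdjMatrix, G.adj_comm]
  simp [Matrix.mul_apply, hsymm, sum_nonAdjMatrix_apply hpart]

theorem degMatrix_eq_of_card_nonAdj [DecidableEq V]
    (hpart : ∀ v, Nat.card {w // ¬ G.Adj v w} = m) :
    G.degMatrix R = ((Fintype.card V : R) - m) • 1 := by
  have hdeg : ∀ v, (G.degree v : R) = Fintype.card V - m := fun v => by
    rw [degree_eq_sum_if_adj, ← sum_nonAdjMatrix_apply hpart v, ← Finset.card_univ,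
      ← nsmul_one, ← Finset.sum_const, ← Finset.sum_sub_distrib]
    exact Finset.sum_congr rfl fun w _ => by by_cases h : G.Adj v w <;> simp [nonAdjMatrix, h]
  rw [degMatrix, funext hdeg, ← Matrix.smul_one_eq_diagonal]

theorem IsCompleteMultipartite.lapMatrix_mul_sub_mul_sub_eq_zero [DecidableEq V]
    (h : G.IsCompleteMultipartite) (hpart : ∀ v, Nat.card {w // ¬ G.Adj v w} = m) :
    G.lapMatrix R * (G.lapMatrix R - (Fintype.card V : R) • 1) *
      (G.lapMatrix R - ((Fintype.card V : R) - m) • 1) = 0 := by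
  set n : R := (Fintype.card V : R)
  let J : Matrix V V R := Matrix.of fun _ _ => 1
  have hJJ : J * J = n • J := by
    ext v w
    simp [J, n, Matrix.mul_apply]
  have hA : G.adjMatrix R = J - G.nonAdjMatrix R := adjMatrix_eq_sub_nonAdjMatrix
  have hAJ : G.adjMatrix R * J = (n - m) • J := by
    rw [hA, Matrix.sub_mul, hJJ, nonAdjMatrix_mul_ones hpart]
    module
  have hAA : (G.adjMatrix R + (m : R) • 1) * G.adjMatrix R = (n - m) • J := by
    rw [hA, Matrix.add_mul, Matrix.sub_mul, Matrix.mul_sub, Matrix.mul_sub, hJJ,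
      nonAdjMatrix_mul_ones hpart, ones_mul_nonAdjMatrix hpart, nonAdjMatrix_mul_self h hpart,
      Matrix.smul_mul, Matrix.one_mul]
    module
  have hL : G.lapMatrix R = (n - m) • 1 - G.adjMatrix R := by
    rw [lapMatrix, degMatrix_eq_of_card_nonAdj hpart]
  have h1 : G.lapMatrix R - n • 1 = -(G.adjMatrix R + (m : R) • 1) := by
    rw [hL]
    module
  have h2 : G.lapMatrix R - (n - m) • 1 = -G.adjMatrix R := by
    rw [hL]
    abel
  rw [h1, h2, mul_assoc, neg_mul_neg, hAA, hL, Matrix.sub_mul, Matrix.smul_mul, Matrix.one_mul,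
    Matrix.mul_smul, hAJ, sub_self]

theorem IsCompleteMultipartite.eq_of_mem_spectrum_lapMatrix {K : Type*} [Field K]
    [DecidableEq V] (h : G.IsCompleteMultipartite) (hpart : ∀ v, Nat.card {w // ¬ G.Adj v w} = m)
    {μ : K} (hμ : μ ∈ spectrum K (G.lapMatrix K)) :
    μ = 0 ∨ μ = Fintype.card V ∨ μ = Fintype.card V - m := by
  have hroot := spectrum.eval_eq_zero_of_aeval_eq_zero
    (P := X * (X - C (Fintype.card V : K)) * (X - C ((Fintype.card V : K) - m))) ?_ hμ
  · simpa [sub_eq_zero, or_assoc] using hroot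
  · simp only [map_mul, map_sub, aeval_X, aeval_C, Algebra.algebraMap_eq_smul_one, ← sub_smul]
    exact h.lapMatrix_mul_sub_mul_sub_eq_zero (R := K) hpart

end SimpleGraph

theorem nc_graph_LIntegral_of_commProb_eq_general
    (G : Type*) [Group G] [Fintype G]
    (p : ℕ) (hp : p.Prime)
    (hmin : ∀ q : ℕ, q.Prime → q ∣ Nat.card G → p ≤ q)
    (h : commProb G = ((p : ℚ) ^ 2 + p - 1) / p ^ 3) :
    ncLIntegral G := by
  have hZ := index_center_eq_sq_of_commProb_eq hp hmin h
  have hmult : (nonCommGraph G).IsCompleteMultipartite :=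
    ⟨fun u v w huv hvw => not_not_intro <|
      commute_of_index_center_eq_sq hp hZ v.2 (not_not.mp huv).symm (not_not.mp hvw)⟩
  have hpart : ∀ v, Nat.card {w // ¬ (nonCommGraph G).Adj v w} = (p - 1) * Nat.card (center G) :=
    fun v => by
      have hv := card_noncentral_commute_add_card_center (v : G)
      rw [card_centralizer_eq_of_index_center_eq_sq hp hZ v.2] at hv
      simp only [nonCommGraph, not_not]
      rw [Nat.sub_one_mul]
      omega
  -- the instances `ncLap` is built with
  let := Classical.decEq G
  let : DecidablePred (· ∉ center G) := fun _ => Classical.dec _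
  let : DecidableRel (nonCommGraph G).Adj := fun _ _ => Classical.dec _
  intro μ hμ
  rcases hmult.eq_of_mem_spectrum_lapMatrix hpart hμ with hμ | hμ | hμ
  · exact ⟨0, by rw [hμ, Int.cast_zero]⟩
  · exact ⟨Fintype.card {x : G // x ∉ center G}, by rw [hμ, Int.cast_natCast]⟩
  · exact ⟨Fintype.card {x : G // x ∉ center G} - ((p - 1) * Nat.card (center G) : ℕ),
      by rw [hμ]; push_cast; rfl⟩

/-- If `p` is the smallest prime divisor of `|G|` and
`Pr(G) = (p² + p − 1)/p³`, then the non-commuting graph of `G` is L-integral. -/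
theorem nc_graph_LIntegral_of_commProb_eq
    (G : Type*) [Group G] [Fintype G]
    (p : ℕ) (hp : p.Prime) (hdvd : p ∣ Nat.card G)
    (hmin : ∀ q : ℕ, q.Prime → q ∣ Nat.card G → p ≤ q)
    (h : commProb G = ((p : ℚ) ^ 2 + p - 1) / p ^ 3) :
    ncLIntegral G :=
  nc_graph_LIntegral_of_commProb_eq_general G p hp hmin h
end
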